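/- For any word w in the positive monoid generated by σ_1 and σ_2, t^2 + t + 1 divides det(B_t(w) - I) in ℤ[t]. -/

import Mathlib

open Polynomial

/-- The positive generators σ₁, σ₂ of the braid group `B₃`. -/
inductive BGen
  | s1 | s2
deriving DecidableEq

/-- The reduced Burau representation over `ℤ[t]`, on the positive generators. -/
noncomputable def burauGen : BGen → Matrix (Fin 2) (Fin 2) (Polynomial ℤ)
  | .s1 => !![-X, 1; 0, 1]
  | .s2 => !![1, 0; X, -X]

/-- The Burau matrix of a positive word. -/
noncomputable def burauPos (w : List BGen) : Matrix (Fin 2) (Fin 2) (Polynomial ℤ) :=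
  (w.map burauGen).prod

/-!
Reduce modulo `X² + X + 1`, i.e. evaluate at a primitive cube root of unity `ω`. There both
generator matrices fix the vector `(1, 1 + ω)` (for `σ₂` this is `-ω - ω² = 1 + ω`), hence so does
`B_ω(w)` for every positive word `w`. Thus `B_ω(w) - I` kills a vector whose first coordinate is
`1`, and multiplying by its adjugate gives `det (B_ω(w) - I) = 0`.
-/

open Matrix

local notation "Φ3" => (X ^ 2 + X + 1 : ℤ[X])

theorem Matrix.list_prod_mulVec_eq_self {n R : Type*} [Fintype n] [DecidableEq n] [Semiring R]
    {l : List (Matrix n n R)} {v : n → R} (h : ∀ A ∈ l, A *ᵥ v = v) : l.prod *ᵥ v = v :=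
  List.prod_induction (· *ᵥ v = v)
    (fun A B hA hB => by rw [← mulVec_mulVec, hB, hA]) (one_mulVec v) h

noncomputable def burauFixedVec : Fin 2 → AdjoinRoot Φ3 := ![1, 1 + AdjoinRoot.root Φ3]

theorem root_sq_add_root_add_one : AdjoinRoot.root Φ3 ^ 2 + AdjoinRoot.root Φ3 + 1 = 0 := by
  rw [← AdjoinRoot.mk_X, ← map_pow, ← map_one (AdjoinRoot.mk Φ3), ← map_add, ← map_add]
  exact AdjoinRoot.mk_self

theorem burauGen_map_mulVec_burauFixedVec (g : BGen) :
    (AdjoinRoot.mk Φ3).mapMatrix (burauGen g) *ᵥ burauFixedVec = burauFixedVec := by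
  have hω := root_sq_add_root_add_one
  ext i
  fin_cases i <;> cases g <;> simp [burauGen, burauFixedVec, mulVec, dotProduct, Fin.sum_univ_two]
  all_goals linear_combination (-1 : AdjoinRoot Φ3) * hω

theorem burauPos_map_mulVec_burauFixedVec (w : List BGen) :
    (AdjoinRoot.mk Φ3).mapMatrix (burauPos w) *ᵥ burauFixedVec = burauFixedVec := by
  rw [burauPos, map_list_prod, List.map_map]
  exact list_prod_mulVec_eq_self <|
    List.forall_mem_map.mpr fun g _ ↦ burauGen_map_mulVec_burauFixedVec g

/-- For any positive word `w` in σ₁, σ₂,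
`t² + t + 1` divides `det (B_t(w) - I)` in `ℤ[t]`. -/
theorem cyclotomic_dvd_burau_det (w : List BGen) :
    (X ^ 2 + X + 1 : Polynomial ℤ) ∣ (burauPos w - 1).det := by
  rw [← AdjoinRoot.mk_eq_zero, RingHom.map_det, map_sub, map_one]
  refine det_eq_zero_of_mulVec_eq_zero_of_mem_nonZeroDivisors (v := burauFixedVec) (i := 0) ?_ ?_
  · rw [sub_mulVec, burauPos_map_mulVec_burauFixedVec, one_mulVec, sub_self]
  · simp [burauFixedVec]
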